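/- arXiv:1911.01153 — 6 statements merged into one kernel-verified Lean document; each statement's English description precedes it below -/
import Mathlib

section
/- Let m be a strictly positive integer and let u, v ∈ {0,1}^m be binary vectors with supp(u) ⊆ supp(v). Then Rel(C^u; p) ≤ Rel(C^v; p) for all p ∈ [0,1]. -/
/-- Reliability of the elementary networks: `g false p = p²` (series),
`g true p = 1 - (1-p)²` (parallel). -/
def g (b : Bool) (p : ℝ) : ℝ := if b then 1 - (1 - p)^2 else p^2

/-- Reliability polynomial of the composition `C^u`,
`Rel(C^u;p) = (g_{u_1} ∘ ⋯ ∘ g_{u_m})(p)`. -/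
def RelC (m : ℕ) (u : Fin m → Bool) (p : ℝ) : ℝ :=
  (List.finRange m).foldr (fun i q => g (u i) q) p

/-- Support of a binary vector. -/
def supp (m : ℕ) (u : Fin m → Bool) : Finset (Fin m) :=
  Finset.univ.filter (fun i => u i = true)

/-- Rank function `ρ(u) = ∑_{i ∈ supp u} i`, with 1-based index values. -/
def rho (m : ℕ) (u : Fin m → Bool) : ℕ :=
  ∑ i ∈ supp m u, ((i : ℕ) + 1)

/-- The support of `u`, sorted increasingly. -/
def sortedSupp (m : ℕ) (u : Fin m → Bool) : List (Fin m) :=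
  Finset.sort (supp m u) (· ≤ ·)

/-- The order `≼_H`: same Hamming weight and `s_i ≤ t_i` for every `i`. -/
def relH (m : ℕ) (u v : Fin m → Bool) : Prop :=
  (supp m u).card = (supp m v).card ∧
    ∀ (i : ℕ) (hu : i < (sortedSupp m u).length) (hv : i < (sortedSupp m v).length),
      (sortedSupp m u).get ⟨i, hu⟩ ≤ (sortedSupp m v).get ⟨i, hv⟩

/-- The order `≼_SH`. -/
def relSH (m : ℕ) (u v : Fin m → Bool) : Prop :=
  ((supp m u).card ≠ (supp m v).card ∧ supp m u ⊆ supp m v) ∨ relH m u v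

/-- The partial order generated by `≼_SH` (reflexive–transitive closure). -/
def leSH (m : ℕ) (u v : Fin m → Bool) : Prop :=
  Relation.ReflTransGen (relSH m) u v

/-! Both `g false` and `g true` are monotone self-maps of `[0, 1]`, and `g false ≤ g true` there
since `g true p - g false p = 2p(1 - p)`. Hence the composition is monotone in each letter,
and enlarging the support raises it. -/

open Set

lemma g_mapsTo (b : Bool) : MapsTo (g b) (Icc 0 1) (Icc 0 1) := by
  rintro p ⟨hp0, hp1⟩
  cases b <;> simp only [g, if_true, if_false, Bool.false_eq_true] <;> constructor <;> nlinarith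

lemma g_monotoneOn (b : Bool) : MonotoneOn (g b) (Icc 0 1) := by
  rintro p ⟨hp0, -⟩ q ⟨-, hq1⟩ hpq
  cases b <;> simp only [g, if_true, if_false, Bool.false_eq_true] <;> nlinarith

lemma g_le_g {b c : Bool} (hbc : b ≤ c) {p : ℝ} (hp : p ∈ Icc 0 1) : g b p ≤ g c p := by
  obtain ⟨hp0, hp1⟩ := hp
  cases b <;> cases c
  · exact le_rfl
  · simp only [g, if_true, if_false, Bool.false_eq_true]
    nlinarith
  · exact absurd hbc (by decide)
  · exact le_rfl

section Composition

variable {ι : Type*} (l : List ι) {p : ℝ}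

lemma foldr_g_mem (u : ι → Bool) (hp : p ∈ Icc 0 1) :
    l.foldr (fun i q => g (u i) q) p ∈ Icc 0 1 := by
  induction l with
  | nil => exact hp
  | cons i l ih => exact g_mapsTo _ ih

lemma foldr_g_le_foldr_g {u v : ι → Bool} (huv : u ≤ v) (hp : p ∈ Icc 0 1) :
    l.foldr (fun i q => g (u i) q) p ≤ l.foldr (fun i q => g (v i) q) p := by
  induction l with
  | nil => exact le_rfl
  | cons i l ih =>
    have hu := foldr_g_mem l u hp
    have hv := foldr_g_mem l v hp
    calc g (u i) (l.foldr (fun i q => g (u i) q) p)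
        ≤ g (u i) (l.foldr (fun i q => g (v i) q) p) := g_monotoneOn _ hu hv ih
      _ ≤ g (v i) (l.foldr (fun i q => g (v i) q) p) := g_le_g (huv i) hv

end Composition

lemma le_of_supp_subset {m : ℕ} {u v : Fin m → Bool} (h : supp m u ⊆ supp m v) : u ≤ v := by
  intro i
  have hi := @h i
  simp only [supp, Finset.mem_filter, Finset.mem_univ, true_and] at hi
  exact Bool.le_iff_imp.mpr hi

theorem rel_le_of_supp_subset_general (m : ℕ) (u v : Fin m → Bool)
    (h : supp m u ⊆ supp m v) :
    ∀ p ∈ Set.Icc (0:ℝ) 1, RelC m u p ≤ RelC m v p :=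
  fun _ hp => foldr_g_le_foldr_g _ (le_of_supp_subset h) hp

/-- if `supp u ⊆ supp v` then `Rel(C^u;p) ≤ Rel(C^v;p)` on `[0,1]`. -/
theorem rel_le_of_supp_subset (m : ℕ) (hm : 0 < m) (u v : Fin m → Bool)
    (h : supp m u ⊆ supp m v) :
    ∀ p ∈ Set.Icc (0:ℝ) 1, RelC m u p ≤ RelC m v p :=
  rel_le_of_supp_subset_general m u v h
end

section
/- Let m be a strictly positive integer and let u, v ∈ {0,1}^m be binary vectors with u ≼_SH v, i.e., either |u| ≠ |v| and supp(u) ⊆ supp(v), or |u| = |v| = l and, writing supp(u) = {s_1 < ⋯ < s_l} and supp(v) = {t_1 < ⋯ < t_l}, s_i ≤ t_i for all 1 ≤ i ≤ l. Then Rel(C^u; p) ≤ Rel(C^v; p) for all p ∈ [0,1]. -/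
/-!
`Rel(C^u; ·)` can only grow when a `0` of `u` becomes a `1` or a `1` moves to a later position:
`g₀` and `g₁` are increasing self-maps of `[0, 1]` with `g₀ ≤ g₁` and `g₁ ∘ g₀ ≤ g₀ ∘ g₁`.
Both cases of `u ≼_SH v` imply suffix dominance: for every `k`, `v` has at least as many ones as
`u` in the positions `≥ k` (for `≼_H`, because `sᵢ ≤ tᵢ` for all `i`). Suffix dominance suffices,
by induction on `m`, peeling off the outermost factor `g_{u₁}`. The only non-monotone case is
`u₁ = 1`, `v₁ = 0`: then the first one of the tail of `v` is removed, the induction hypothesis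
applies, and the removed one is pulled to the front since `g₁ ∘ Rel(C^w) ≤ g₀ ∘ Rel(C^{w + eⱼ})`.
-/

open Finset Function

lemma g_mem_Icc (b : Bool) {p : ℝ} (hp : p ∈ Set.Icc (0 : ℝ) 1) : g b p ∈ Set.Icc (0 : ℝ) 1 := by
  obtain ⟨h0, h1⟩ := hp
  cases b <;> simp only [g, Bool.false_eq_true, if_true, if_false, Set.mem_Icc] <;>
    constructor <;> nlinarith

lemma g_le_g_s4 {b b' : Bool} {p q : ℝ} (hb : b ≤ b') (hp : 0 ≤ p) (hq : q ≤ 1) (hpq : p ≤ q) :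
    g b p ≤ g b' q := by
  cases b <;> cases b' <;> simp only [g, Bool.false_eq_true, if_true, if_false] <;>
    first | nlinarith | exact absurd hb (by decide)

-- The difference of the two sides is `2 q² (1 - q)²`.
lemma g_true_g_false_le (q : ℝ) : g true (g false q) ≤ g false (g true q) := by
  simp only [g, Bool.false_eq_true, if_true, if_false]
  nlinarith [sq_nonneg (q * (1 - q))]

lemma g_true_g_le_g_false_g (b : Bool) {x y : ℝ} (hx : x ∈ Set.Icc (0 : ℝ) 1)
    (hy : y ∈ Set.Icc (0 : ℝ) 1) (h : g true x ≤ g false y) :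
    g true (g b x) ≤ g false (g b y) := by
  cases b
  · calc g true (g false x) ≤ g false (g true x) := g_true_g_false_le x
      _ ≤ g false (g false y) := g_le_g_s4 le_rfl (g_mem_Icc _ hx).1 (g_mem_Icc _ hy).2 h
  · calc g true (g true x) ≤ g true (g false y) :=
          g_le_g_s4 le_rfl (g_mem_Icc _ hx).1 (g_mem_Icc _ hy).2 h
      _ ≤ g false (g true y) := g_true_g_false_le y

lemma RelC_succ (m : ℕ) (u : Fin (m + 1) → Bool) (p : ℝ) :
    RelC (m + 1) u p = g (u 0) (RelC m (Fin.tail u) p) := by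
  simp [RelC, List.finRange_succ, List.foldr_map, Fin.tail]

lemma RelC_mem_Icc (m : ℕ) (u : Fin m → Bool) {p : ℝ} (hp : p ∈ Set.Icc (0 : ℝ) 1) :
    RelC m u p ∈ Set.Icc (0 : ℝ) 1 := by
  induction m with
  | zero => exact hp
  | succ m ih => rw [RelC_succ]; exact g_mem_Icc _ (ih _)

lemma g_true_RelC_le_g_false_RelC_update (m : ℕ) (u : Fin m → Bool) {c : Fin m}
    (hc : u c = false) {p : ℝ} (hp : p ∈ Set.Icc (0 : ℝ) 1) :
    g true (RelC m u p) ≤ g false (RelC m (update u c true) p) := by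
  induction m with
  | zero => exact c.elim0
  | succ m ih =>
    rw [RelC_succ, RelC_succ]
    cases c using Fin.cases with
    | zero =>
      rw [hc, update_self, Fin.tail_update_zero]
      exact g_true_g_false_le _
    | succ c =>
      rw [update_of_ne (Fin.succ_ne_zero c).symm, Fin.tail_update_succ]
      exact g_true_g_le_g_false_g _ (RelC_mem_Icc _ _ hp) (RelC_mem_Icc _ _ hp) (ih _ hc)

lemma mem_supp {m : ℕ} {u : Fin m → Bool} {i : Fin m} : i ∈ supp m u ↔ u i = true := by
  simp [supp]

lemma supp_update_false (m : ℕ) (v : Fin m → Bool) (c : Fin m) :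
    supp m (update v c false) = (supp m v).erase c := by
  ext i
  by_cases hi : i = c <;> simp [mem_supp, hi]

def suffixWeight (m : ℕ) (u : Fin m → Bool) (k : ℕ) : ℕ :=
  #{i ∈ supp m u | k ≤ i.val}

lemma suffixWeight_antitone (m : ℕ) (u : Fin m → Bool) : Antitone (suffixWeight m u) :=
  fun _ _ hkl => card_le_card (monotone_filter_right _ fun _ _ => hkl.trans)

lemma suffixWeight_zero (m : ℕ) (u : Fin m → Bool) : suffixWeight m u 0 = #(supp m u) := by
  simp [suffixWeight]

lemma suffixWeight_tail (m : ℕ) (u : Fin (m + 1) → Bool) (k : ℕ) :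
    suffixWeight m (Fin.tail u) k = suffixWeight (m + 1) u (k + 1) := by
  simp only [suffixWeight, supp, filter_filter]
  rw [card_filter, card_filter, Fin.sum_univ_succ]
  simp only [Fin.tail, Fin.val_zero, Fin.val_succ, add_le_add_iff_right, nonpos_iff_eq_zero,
    Nat.add_one_ne_zero, and_false, if_false, zero_add]
  -- the two sides differ only in their decidability instances
  rfl

lemma suffixWeight_succ_zero (m : ℕ) (u : Fin (m + 1) → Bool) :
    suffixWeight (m + 1) u 0 = suffixWeight m (Fin.tail u) 0 + (u 0).toNat := by
  simp only [suffixWeight, supp, filter_filter, card_filter, Fin.sum_univ_succ]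
  cases u 0 <;> simp only [Fin.tail, zero_le, and_true] <;> simp [add_comm]

lemma exists_suffixWeight_le_update_false (m : ℕ) (u v : Fin m → Bool)
    (h : ∀ k, suffixWeight m u k ≤ suffixWeight m v k)
    (h0 : suffixWeight m u 0 < suffixWeight m v 0) :
    ∃ c, v c = true ∧ ∀ k, suffixWeight m u k ≤ suffixWeight m (update v c false) k := by
  have hne : (supp m v).Nonempty := by rw [← card_pos, ← suffixWeight_zero]; omega
  set c := (supp m v).min' hne
  have hc : c ∈ supp m v := min'_mem _ _
  refine ⟨c, mem_supp.1 hc, fun k => ?_⟩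
  change _ ≤ #{i ∈ supp m (update v c false) | k ≤ i.val}
  rw [supp_update_false, filter_erase]
  by_cases hk : k ≤ c.val
  · have hall : {i ∈ supp m v | k ≤ i.val} = supp m v :=
      filter_true_of_mem fun i hi => hk.trans (Fin.le_iff_val_le_val.1 (min'_le _ _ hi))
    rw [hall, card_erase_of_mem hc, ← suffixWeight_zero]
    have := suffixWeight_antitone m u (Nat.zero_le k)
    omega
  · rw [erase_eq_of_notMem (by simp [hk])]
    exact h k

theorem RelC_le_of_suffixWeight_le (m : ℕ) (u v : Fin m → Bool)
    (h : ∀ k, suffixWeight m u k ≤ suffixWeight m v k) {p : ℝ} (hp : p ∈ Set.Icc (0 : ℝ) 1) :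
    RelC m u p ≤ RelC m v p := by
  induction m with
  | zero => exact le_rfl
  | succ m ih =>
    have htail : ∀ k, suffixWeight m (Fin.tail u) k ≤ suffixWeight m (Fin.tail v) k := fun k => by
      simpa only [suffixWeight_tail] using h (k + 1)
    rw [RelC_succ, RelC_succ]
    by_cases h0 : u 0 ≤ v 0
    · exact g_le_g_s4 h0 (RelC_mem_Icc _ _ hp).1 (RelC_mem_Icc _ _ hp).2 (ih _ _ htail)
    obtain ⟨hu0, hv0⟩ : u 0 = true ∧ v 0 = false := by
      revert h0; cases u 0 <;> cases v 0 <;> decide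
    have hlt : suffixWeight m (Fin.tail u) 0 < suffixWeight m (Fin.tail v) 0 := by
      have := h 0
      rw [suffixWeight_succ_zero, suffixWeight_succ_zero, hu0, hv0] at this
      simpa using this
    obtain ⟨c, hc, hdom⟩ := exists_suffixWeight_le_update_false m _ _ htail hlt
    calc g (u 0) (RelC m (Fin.tail u) p)
        = g true (RelC m (Fin.tail u) p) := by rw [hu0]
      _ ≤ g true (RelC m (update (Fin.tail v) c false) p) :=
          g_le_g_s4 le_rfl (RelC_mem_Icc _ _ hp).1 (RelC_mem_Icc _ _ hp).2 (ih _ _ hdom)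
      _ ≤ g false (RelC m (update (update (Fin.tail v) c false) c true) p) :=
          g_true_RelC_le_g_false_RelC_update m _ (update_self ..) hp
      _ = g (v 0) (RelC m (Fin.tail v) p) := by
          rw [update_idem, update_eq_self_iff.2 hc.symm, hv0]

lemma List.Forall₂.countP_le {α β : Type*} {R : α → β → Prop} {p : α → Bool} {q : β → Bool}
    {l₁ : List α} {l₂ : List β} (h : List.Forall₂ R l₁ l₂)
    (hpq : ∀ a b, R a b → p a = true → q b = true) : l₁.countP p ≤ l₂.countP q := by
  induction h with
  | nil => rfl
  | @cons a b _ _ hab _ ih =>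
    rw [List.countP_cons, List.countP_cons]
    by_cases ha : p a = true
    · simp [ha, hpq a b hab ha, ih]
    · simp only [ha, Bool.false_eq_true, if_false, add_zero]
      exact ih.trans (Nat.le_add_right _ _)

lemma Finset.card_filter_eq_countP_sort {α : Type*} (s : Finset α) (r : α → α → Prop)
    [DecidableRel r] [IsTrans α r] [Std.Antisymm r] [Std.Total r] (p : α → Prop)
    [DecidablePred p] : #{x ∈ s | p x} = (s.sort r).countP fun x => decide (p x) := by
  rw [card_def, filter_val, ← Multiset.countP_eq_card_filter, ← Multiset.coe_countP, sort_eq]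

lemma forall₂_sortedSupp_of_relH {m : ℕ} {u v : Fin m → Bool} (h : relH m u v) :
    List.Forall₂ (· ≤ ·) (sortedSupp m u) (sortedSupp m v) :=
  List.forall₂_iff_get.2 ⟨by simp [sortedSupp, h.1], h.2⟩

lemma suffixWeight_le_of_relSH {m : ℕ} {u v : Fin m → Bool} (h : relSH m u v) (k : ℕ) :
    suffixWeight m u k ≤ suffixWeight m v k := by
  rcases h with ⟨-, hsub⟩ | hH
  · exact card_le_card (filter_subset_filter _ hsub)
  · rw [suffixWeight, suffixWeight, card_filter_eq_countP_sort _ (· ≤ ·),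
      card_filter_eq_countP_sort _ (· ≤ ·)]
    exact (forall₂_sortedSupp_of_relH hH).countP_le fun a b hab ha => by
      simp only [decide_eq_true_eq] at ha ⊢
      exact ha.trans hab

theorem rel_le_of_relSH_general (m : ℕ) (u v : Fin m → Bool)
    (h : relSH m u v) :
    ∀ p ∈ Set.Icc (0:ℝ) 1, RelC m u p ≤ RelC m v p :=
  fun _ hp => RelC_le_of_suffixWeight_le m u v (suffixWeight_le_of_relSH h) hp

/-- if `u ≼_SH v` then `Rel(C^u;p) ≤ Rel(C^v;p)` on `[0,1]`. -/
theorem rel_le_of_relSH (m : ℕ) (hm : 0 < m) (u v : Fin m → Bool)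
    (h : relSH m u v) :
    ∀ p ∈ Set.Icc (0:ℝ) 1, RelC m u p ≤ RelC m v p :=
  rel_le_of_relSH_general m u v h
end

section
/- Let m be a strictly positive integer and let ⪯ be the partial order on {0,1}^m generated by ≼_SH. Then the poset ({0,1}^m, ⪯) is graded with rank function ρ(u) = ∑_{i ∈ supp(u)} i; that is, the all-zeros vector is the unique minimal element and has ρ = 0, and whenever v covers u (meaning u ⪯ v, u ≠ v, and there is no w with u ⪯ w ⪯ v and w ∉ {u,v}), one has ρ(v) = ρ(u) + 1. -/
/-!
The zero vector lies below every other vector by inclusion of supports, and nothing else lies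
below it. For the covering relation it suffices to find, for `u ⪯ v` with `u ≠ v`, some `w` with
`u ⪯ w ⪯ v` and `ρ(w) = ρ(u) + 1`; a covering pair forces `w = v`. Such a `w` is obtained from
`u` by one of the two moves raising `ρ` by one: adding the first position, or pushing an element
`i` of the support to a vacant `i + 1`. Writing `F_S(x) = #{y ∈ S | y ≤ x}`, the relation `≼_H`
says `F_T ≤ F_S` pointwise; in that case the push happens at the largest `a ∈ S` with
`F_T(a) < F_S(a)`. If instead `supp u ⊂ supp v`, let `t` be the least element of the difference:
the move is made just below `t`, and the result is contained in `v` with `t` pushed down to the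
newly occupied position, which lies `≼_H`-below `v`.
-/

open Finset

theorem Fin.lt_card_filter_iff_of_antitone {k : ℕ} {p : Fin k → Prop} [DecidablePred p]
    (hp : Antitone p) (i : Fin k) : (i : ℕ) < #{j | p j} ↔ p i := by
  constructor
  · intro hi
    by_contra hpi
    have hsub : ({j | p j} : Finset (Fin k)) ⊆ Iio i := fun j hj =>
      mem_Iio.2 (lt_of_not_ge fun hij => hpi (hp hij (mem_filter.1 hj).2))
    have := card_le_card hsub
    rw [Fin.card_Iio] at this
    omega
  · intro hpi
    have hsub : Iic i ⊆ ({j | p j} : Finset (Fin k)) := fun j hj =>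
      mem_filter.2 ⟨mem_univ j, hp (mem_Iic.1 hj) hpi⟩
    have := card_le_card hsub
    rw [Fin.card_Iic] at this
    omega

theorem Finset.sort_getElem_le_iff {α : Type*} [LinearOrder α] (s : Finset α) {i : ℕ}
    (hi : i < (s.sort (· ≤ ·)).length) (x : α) :
    (s.sort (· ≤ ·))[i] ≤ x ↔ i < #{y ∈ s | y ≤ x} := by
  set f := s.orderEmbOfFin rfl
  have hcard : #{y ∈ s | y ≤ x} = #{j | f j ≤ x} := by
    conv_lhs => rw [← map_orderEmbOfFin_univ s rfl]
    rw [filter_map, card_map]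
    rfl
  rw [hcard, Fin.lt_card_filter_iff_of_antitone (i := ⟨i, by simpa using hi⟩)
    fun j k hjk h => (f.monotone hjk).trans h]
  rfl

theorem Finset.sort_le_sort_iff {α : Type*} [LinearOrder α] {s t : Finset α} (hst : #t ≤ #s) :
    (∀ (i : ℕ) (hs : i < (s.sort (· ≤ ·)).length) (ht : i < (t.sort (· ≤ ·)).length),
      (s.sort (· ≤ ·))[i] ≤ (t.sort (· ≤ ·))[i]) ↔
    ∀ x, #{y ∈ t | y ≤ x} ≤ #{y ∈ s | y ≤ x} := by
  constructor
  · intro h x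
    by_contra! hlt
    have hk : #{y ∈ t | y ≤ x} ≤ #t := card_filter_le _ _
    have hs : #{y ∈ s | y ≤ x} < (s.sort (· ≤ ·)).length := by rw [length_sort]; omega
    have ht : #{y ∈ s | y ≤ x} < (t.sort (· ≤ ·)).length := by rw [length_sort]; omega
    have htx := (sort_getElem_le_iff t ht x).2 hlt
    exact (sort_getElem_le_iff s hs x).1 ((h _ hs ht).trans htx) |>.false
  · intro h i hs ht
    rw [sort_getElem_le_iff]
    exact ((sort_getElem_le_iff t ht _).1 le_rfl).trans_le (h _)

theorem Finset.card_filter_le_erase_add {α : Type*} [LinearOrder α] {S : Finset α} {a : α}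
    (ha : a ∈ S) (x : α) :
    #{y ∈ S.erase a | y ≤ x} + (if a ≤ x then 1 else 0) = #{y ∈ S | y ≤ x} := by
  rw [filter_erase]
  split_ifs with hax
  · exact card_erase_add_one (mem_filter.2 ⟨ha, hax⟩)
  · rw [add_zero, erase_eq_of_notMem]
    exact fun h => hax (mem_filter.1 h).2

theorem Finset.card_filter_le_lt_of_forall_lt {α : Type*} [LinearOrder α] {S T : Finset α}
    {y : α} (hyS : y ∈ S) (hyT : y ∉ T) (h : ∀ z ∈ T, z < y → z ∈ S) :
    #{z ∈ T | z ≤ y} < #{z ∈ S | z ≤ y} := by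
  refine card_lt_card ((ssubset_iff_of_subset fun z hz => ?_).2 ⟨y, ?_, ?_⟩)
  · obtain ⟨hzT, hzy⟩ := mem_filter.1 hz
    exact mem_filter.2 ⟨h z hzT (hzy.lt_of_ne (ne_of_mem_of_not_mem hzT hyT)), hzy⟩
  · exact mem_filter.2 ⟨hyS, le_rfl⟩
  · exact fun hy => hyT (mem_filter.1 hy).1

section

variable {m : ℕ}

theorem Fin.card_filter_le_of_succ {S : Finset (Fin m)} {a b : Fin m} (hab : (a : ℕ) + 1 = b) :
    #{y ∈ S | y ≤ b} = #{y ∈ S | y ≤ a} + if b ∈ S then 1 else 0 := by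
  have hsplit : {y ∈ S | y ≤ b} = {y ∈ S | y ≤ a} ∪ {y ∈ S | y = b} := by
    ext y
    simp only [mem_filter, mem_union, ← and_or_left, Fin.le_def, Fin.ext_iff]
    exact and_congr_right fun _ => by omega
  rw [hsplit, card_union_of_disjoint, filter_eq']
  · split_ifs <;> simp
  · exact disjoint_filter.2 fun y _ hya hyb => by
      rw [hyb, Fin.le_def] at hya
      omega

theorem exists_shift_up_of_dominates {S T : Finset (Fin m)} (hcard : #S = #T)
    (hdom : ∀ x, #{y ∈ T | y ≤ x} ≤ #{y ∈ S | y ≤ x}) (hne : S ≠ T) :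
    ∃ a b : Fin m, (a : ℕ) + 1 = b ∧ a ∈ S ∧ b ∉ S ∧
      #{y ∈ T | y ≤ a} < #{y ∈ S | y ≤ a} := by
  set D := {a ∈ S | #{y ∈ T | y ≤ a} < #{y ∈ S | y ≤ a}}
  -- The least element of `S ∆ T` lies in `D`: it cannot lie in `T`, as `F_T ≤ F_S` there.
  have hD : D.Nonempty := by
    have hST : (symmDiff S T).Nonempty := symmDiff_nonempty.2 hne
    set y := (symmDiff S T).min' hST
    have hbelow : ∀ z < y, (z ∈ S ↔ z ∈ T) := fun z hz => by
      by_contra hzST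
      exact (min'_le _ z (mem_symmDiff.2 (by tauto))).not_gt hz
    rcases mem_symmDiff.1 (min'_mem _ hST) with ⟨hyS, hyT⟩ | ⟨hyT, hyS⟩
    · exact ⟨y, mem_filter.2 ⟨hyS, card_filter_le_lt_of_forall_lt hyS hyT
        fun z _ hz => (hbelow z hz).2 ‹_›⟩⟩
    · exact absurd (hdom y) (card_filter_le_lt_of_forall_lt hyT hyS
        fun z _ hz => (hbelow z hz).1 ‹_›).not_ge
  obtain ⟨a, haD, hmax⟩ : ∃ a ∈ D, ∀ z ∈ D, z ≤ a :=
    ⟨D.max' hD, max'_mem D hD, fun z hz => le_max' D z hz⟩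
  obtain ⟨haS, hlt⟩ := mem_filter.1 haD
  have ha_succ : (a : ℕ) + 1 < m := by
    by_contra! hlast
    have htop : ∀ z : Fin m, z ≤ a := fun z => Fin.le_def.2 (by omega)
    rw [filter_true_of_mem fun z _ => htop z, filter_true_of_mem fun z _ => htop z] at hlt
    omega
  let b : Fin m := ⟨(a : ℕ) + 1, ha_succ⟩
  have hab : (a : ℕ) + 1 = b := rfl
  refine ⟨a, b, hab, haS, fun hbS => ?_, hlt⟩
  have hbD : b ∈ D := by
    refine mem_filter.2 ⟨hbS, ?_⟩
    rw [Fin.card_filter_le_of_succ hab, Fin.card_filter_le_of_succ hab, if_pos hbS]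
    split_ifs <;> omega
  have := Fin.le_def.1 (hmax b hbD)
  omega

def vecOf (S : Finset (Fin m)) : Fin m → Bool := fun i => decide (i ∈ S)

@[simp]
theorem supp_vecOf (S : Finset (Fin m)) : supp m (vecOf S) = S := by
  ext i
  simp [supp, vecOf]

theorem supp_zero : supp m (fun _ => false) = ∅ := by
  simp [supp]

theorem eq_of_supp_eq {u v : Fin m → Bool} (h : supp m u = supp m v) : u = v := by
  funext i
  have hi := Finset.ext_iff.1 h i
  simp only [supp, mem_filter, mem_univ, true_and] at hi
  exact Bool.eq_iff_iff.2 hi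

theorem relH_iff {u v : Fin m → Bool} :
    relH m u v ↔ #(supp m u) = #(supp m v) ∧
      ∀ x, #{y ∈ supp m v | y ≤ x} ≤ #{y ∈ supp m u | y ≤ x} :=
  and_congr_right fun h => Finset.sort_le_sort_iff h.ge

theorem relH_of_erase_eq {u v : Fin m → Bool} {a b : Fin m} (hab : a ≤ b) (ha : a ∈ supp m u)
    (hb : b ∈ supp m v) (h : (supp m u).erase a = (supp m v).erase b) : relH m u v := by
  refine relH_iff.2 ⟨?_, fun x => ?_⟩
  · rw [← card_erase_add_one ha, ← card_erase_add_one hb, h]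
  · rw [← card_filter_le_erase_add ha, ← card_filter_le_erase_add hb, h]
    split_ifs <;> omega

theorem rho_add_of_erase_eq {u v : Fin m → Bool} {a b : Fin m} (ha : a ∈ supp m u)
    (hb : b ∈ supp m v) (h : (supp m u).erase a = (supp m v).erase b) :
    rho m u + b = rho m v + a := by
  rw [rho, rho, ← sum_erase_add _ _ ha, ← sum_erase_add _ _ hb, h]
  ring

theorem rho_of_supp_eq_insert {u w : Fin m → Bool} {b : Fin m} (hb : b ∉ supp m u)
    (h : supp m w = insert b (supp m u)) : rho m w = rho m u + b + 1 := by
  rw [rho, h, sum_insert hb, rho]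
  ring

theorem leSH_of_subset_of_relH {u v w : Fin m → Bool} (huw : supp m u ⊆ supp m w)
    (hwv : relH m w v) : leSH m u v := by
  by_cases hcard : #(supp m u) = #(supp m w)
  · rw [eq_of_supp_eq (eq_of_subset_of_card_le huw hcard.ge)]
    exact .single (Or.inr hwv)
  · exact .head (Or.inl ⟨hcard, huw⟩) (.single (Or.inr hwv))

theorem exists_rho_succ_of_relH {u v : Fin m → Bool} (h : relH m u v) (hne : u ≠ v) :
    ∃ w, rho m w = rho m u + 1 ∧ relH m u w ∧ relH m w v := by
  obtain ⟨hcard, hdom⟩ := relH_iff.1 h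
  obtain ⟨a, b, hab, haS, hbS, hlt⟩ :=
    exists_shift_up_of_dominates hcard hdom fun h => hne (eq_of_supp_eq h)
  set W := insert b ((supp m u).erase a)
  have hbW : b ∈ supp m (vecOf W) := by simp [W]
  have herase : (supp m u).erase a = (supp m (vecOf W)).erase b := by
    rw [supp_vecOf, erase_insert fun h => hbS (mem_of_mem_erase h)]
  have huw : relH m u (vecOf W) := relH_of_erase_eq (Fin.le_def.2 (by omega)) haS hbW herase
  refine ⟨vecOf W, ?_, huw, relH_iff.2 ⟨huw.1.symm.trans hcard, fun x => ?_⟩⟩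
  · have := rho_add_of_erase_eq haS hbW herase
    omega
  have hW := card_filter_le_erase_add hbW x
  have hS := card_filter_le_erase_add haS x
  rw [← herase] at hW
  have hx := hdom x
  by_cases hxa : x = a
  · subst hxa
    rw [if_neg (by rw [Fin.le_def]; omega)] at hW
    rw [if_pos le_rfl] at hS
    omega
  · have hiff : a ≤ x ↔ b ≤ x := by
      rw [Fin.le_def, Fin.le_def]
      have := Fin.val_ne_of_ne hxa
      omega
    simp only [hiff] at hS
    omega

theorem exists_relSH_rho_succ_of_notMem {u : Fin m → Bool} {t : Fin m} (ht : t ∉ supp m u) :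
    ∃ w p, p ≤ t ∧ p ∉ supp m u ∧ supp m w ⊆ insert p (supp m u) ∧
      rho m w = rho m u + 1 ∧ relSH m u w := by
  -- `p` is the position just after the last element of `S` below `t`, or the first position.
  set S := supp m u
  have hpS : ∀ p ≤ t, (∀ z ∈ S, z < t → z < p) → p ∉ S := fun p hpt hp hpS =>
    (hp p hpS (hpt.lt_of_ne fun h => ht (h ▸ hpS))).false
  by_cases hbelow : ({z ∈ S | z < t} : Finset (Fin m)).Nonempty
  · obtain ⟨q, hq, hqmax⟩ : ∃ q ∈ ({z ∈ S | z < t} : Finset (Fin m)), ∀ z ∈ S, z < t → z ≤ q :=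
      ⟨_, max'_mem _ hbelow, fun z hz hzt => le_max' _ z (mem_filter.2 ⟨hz, hzt⟩)⟩
    obtain ⟨hqS, hqt⟩ := mem_filter.1 hq
    let p : Fin m := ⟨(q : ℕ) + 1, by omega⟩
    have hpt : p ≤ t := Fin.le_def.2 (Fin.lt_def.1 hqt)
    have hp : p ∉ S := hpS p hpt fun z hz hzt => Fin.lt_def.2 (Nat.lt_succ_of_le (hqmax z hz hzt))
    set W := insert p (S.erase q)
    have hpW : p ∈ supp m (vecOf W) := by simp [W]
    have herase : S.erase q = (supp m (vecOf W)).erase p := by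
      rw [supp_vecOf, erase_insert fun h => hp (mem_of_mem_erase h)]
    refine ⟨vecOf W, p, hpt, hp, ?_, ?_, Or.inr ?_⟩
    · simpa [W] using insert_subset_insert p (erase_subset q S)
    · have := rho_add_of_erase_eq hqS hpW herase
      simp only [p] at this
      omega
    · exact relH_of_erase_eq (Fin.le_def.2 (Nat.le_succ _)) hqS hpW herase
  · let p : Fin m := ⟨0, t.pos⟩
    have hp : p ∉ S := hpS p (Fin.le_def.2 (Nat.zero_le _)) fun z hz hzt =>
      absurd ⟨z, mem_filter.2 ⟨hz, hzt⟩⟩ hbelow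
    refine ⟨vecOf (insert p S), p, Fin.le_def.2 (Nat.zero_le _), hp, by simp, ?_, Or.inl ⟨?_, ?_⟩⟩
    · exact rho_of_supp_eq_insert hp (supp_vecOf _)
    · rw [supp_vecOf, card_insert_of_notMem hp]
      exact (Nat.succ_ne_self _).symm
    · rw [supp_vecOf]
      exact subset_insert p S

theorem exists_rho_succ_of_ssubset {u v : Fin m → Bool} (h : supp m u ⊂ supp m v) :
    ∃ w, rho m w = rho m u + 1 ∧ relSH m u w ∧ leSH m w v := by
  obtain ⟨t, htT, htS, hmin⟩ :
      ∃ t ∈ supp m v, t ∉ supp m u ∧ ∀ z ∈ supp m v, z < t → z ∈ supp m u := by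
    have hdiff := sdiff_nonempty.2 (not_subset_of_ssubset h)
    obtain ⟨htT, htS⟩ := mem_sdiff.1 (min'_mem _ hdiff)
    refine ⟨_, htT, htS, fun z hzT hzt => ?_⟩
    by_contra hzS
    exact (min'_le _ z (mem_sdiff.2 ⟨hzT, hzS⟩)).not_gt hzt
  obtain ⟨w, p, hpt, hpS, hwp, hrho, huw⟩ := exists_relSH_rho_succ_of_notMem htS
  have hpT : p ∉ (supp m v).erase t := fun hp =>
    hpS (hmin p (mem_of_mem_erase hp) (hpt.lt_of_ne (ne_of_mem_erase hp)))
  set V := insert p ((supp m v).erase t)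
  refine ⟨w, hrho, huw, leSH_of_subset_of_relH (w := vecOf V) ?_ ?_⟩
  · rw [supp_vecOf]
    exact hwp.trans (insert_subset_insert p fun z hz =>
      mem_erase.2 ⟨ne_of_mem_of_not_mem hz htS, h.subset hz⟩)
  · refine relH_of_erase_eq hpt (by simp [V]) htT ?_
    rw [supp_vecOf, erase_insert hpT]

theorem exists_rho_succ_of_relSH {u v : Fin m → Bool} (h : relSH m u v) (hne : u ≠ v) :
    ∃ w, rho m w = rho m u + 1 ∧ leSH m u w ∧ leSH m w v := by
  rcases h with ⟨hcard, hsub⟩ | hH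
  · obtain ⟨w, hrho, huw, hwv⟩ :=
      exists_rho_succ_of_ssubset (hsub.ssubset_of_ne fun h => hcard (h ▸ rfl))
    exact ⟨w, hrho, .single huw, hwv⟩
  · obtain ⟨w, hrho, huw, hwv⟩ := exists_rho_succ_of_relH hH hne
    exact ⟨w, hrho, .single (Or.inr huw), .single (Or.inr hwv)⟩

theorem exists_rho_succ_of_leSH {u v : Fin m → Bool} (h : leSH m u v) (hne : u ≠ v) :
    ∃ w, rho m w = rho m u + 1 ∧ leSH m u w ∧ leSH m w v := by
  induction h using Relation.ReflTransGen.head_induction_on with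
  | refl => exact absurd rfl hne
  | @head u c huc hcv ih =>
    by_cases huc' : u = c
    · subst huc'
      exact ih hne
    · obtain ⟨w, hrho, huw, hwc⟩ := exists_rho_succ_of_relSH huc huc'
      exact ⟨w, hrho, huw, hwc.trans hcv⟩

theorem eq_zero_of_relSH_zero {u : Fin m → Bool} (h : relSH m u fun _ => false) :
    u = fun _ => false := by
  refine eq_of_supp_eq (supp_zero ▸ ?_)
  rcases h with ⟨-, hsub⟩ | ⟨hcard, -⟩
  · exact subset_empty.1 (supp_zero ▸ hsub)
  · rwa [supp_zero, card_empty, card_eq_zero] at hcard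

theorem eq_zero_of_leSH_zero {u : Fin m → Bool} (h : leSH m u fun _ => false) :
    u = fun _ => false := by
  induction h using Relation.ReflTransGen.head_induction_on with
  | refl => rfl
  | head huc _ ih => exact eq_zero_of_relSH_zero (ih ▸ huc)

theorem zero_relSH {u : Fin m → Bool} (hu : u ≠ fun _ => false) : relSH m (fun _ => false) u := by
  refine Or.inl ⟨fun hcard => hu (eq_of_supp_eq ?_), supp_zero ▸ empty_subset _⟩
  rw [supp_zero, card_empty] at hcard
  rw [supp_zero, card_eq_zero.1 hcard.symm]

end

theorem poset_graded_general (m : ℕ) :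
    rho m (fun _ => false) = 0 ∧
    (∀ w : Fin m → Bool, leSH m w (fun _ => false) → w = fun _ => false) ∧
    (∀ u : Fin m → Bool, (∀ w : Fin m → Bool, leSH m w u → w = u) →
      u = fun _ => false) ∧
    (∀ u v : Fin m → Bool, leSH m u v → u ≠ v →
      (∀ w : Fin m → Bool, leSH m u w → leSH m w v → w = u ∨ w = v) →
      rho m v = rho m u + 1) := by
  refine ⟨by rw [rho, supp_zero, sum_empty], fun w => eq_zero_of_leSH_zero,
    fun u hmin => ?_, fun u v huv hne hcover => ?_⟩
  · by_contra hu
    exact hu (hmin _ (.single (zero_relSH hu))).symm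
  · obtain ⟨w, hrho, huw, hwv⟩ := exists_rho_succ_of_leSH huv hne
    rcases hcover w huw hwv with rfl | rfl
    · omega
    · exact hrho

/-- the poset `({0,1}^m, ⪯)` generated by `≼_SH` is graded with rank
function `ρ(u) = ∑_{i ∈ supp u} i`: the all-zeros vector is the unique minimal
element and has rank `0`, and whenever `v` covers `u` one has `ρ(v) = ρ(u) + 1`. -/
theorem poset_graded (m : ℕ) (hm : 0 < m) :
    rho m (fun _ => false) = 0 ∧
    (∀ w : Fin m → Bool, leSH m w (fun _ => false) → w = fun _ => false) ∧
    (∀ u : Fin m → Bool, (∀ w : Fin m → Bool, leSH m w u → w = u) →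
      u = fun _ => false) ∧
    (∀ u v : Fin m → Bool, leSH m u v → u ≠ v →
      (∀ w : Fin m → Bool, leSH m u w → leSH m w v → w = u ∨ w = v) →
      rho m v = rho m u + 1) :=
  poset_graded_general m
end

section
/- Let m be a strictly positive integer and for an integer i let #P_i denote the number of subsets S ⊆ {1,…,m} with ∑_{j∈S} j = i. Then the sequence of rank numbers is unimodal up to the middle: for all integers i, j with 0 ≤ i ≤ j and 2j ≤ m(m+1)/2, one has #P_i ≤ #P_j. -/
/-!
Proctor's argument. On real functions on the subsets of `{1, …, m}`, let `U` be a weighted sum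
of the raising moves "insert `1`" and "replace `k` by `k + 1`", each of which raises the rank
`ρ` by one. Moves with distinct labels commute with each other's inverses, so for suitable
weights `U Uᵀ - Uᵀ U` is diagonal with entry `N - 2 ρ S` at `S`, where `N = m (m + 1) / 2`.
For `w` supported on rank `i` this gives `‖w U‖² = ‖U w‖² + (N - 2 i) ‖w‖²`, so when `2 i < N`
the map `w ↦ w U` sends rank `i` injectively into rank `i + 1`.
-/

open Finset Matrix

namespace Finset

variable {α : Type*} [DecidableEq α]

def insertPEquiv (a : α) : Finset α ≃. Finset α where
  toFun S := if a ∈ S then none else some (insert a S)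
  invFun T := if a ∈ T then some (T.erase a) else none
  inv S T := by
    by_cases hS : a ∈ S <;> by_cases hT : a ∈ T <;> simp [hS, hT] <;> grind

def movePEquiv (a b : α) : Finset α ≃. Finset α :=
  (insertPEquiv a).symm.trans (insertPEquiv b)

variable {a b c d : α} {S T : Finset α}

lemma mem_insertPEquiv : T ∈ insertPEquiv a S ↔ a ∉ S ∧ T = insert a S := by
  unfold insertPEquiv
  by_cases h : a ∈ S <;> simp [h, eq_comm]

lemma mem_insertPEquiv_symm : T ∈ (insertPEquiv a).symm S ↔ a ∈ S ∧ T = S.erase a := by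
  rw [PEquiv.mem_iff_mem, mem_insertPEquiv]
  grind

lemma movePEquiv_symm : (movePEquiv a b).symm = movePEquiv b a := rfl

lemma mem_movePEquiv (hab : a ≠ b) :
    T ∈ movePEquiv a b S ↔ a ∈ S ∧ b ∉ S ∧ T = insert b (S.erase a) := by
  simp only [movePEquiv, PEquiv.mem_trans, mem_insertPEquiv, mem_insertPEquiv_symm]
  grind

lemma isSome_insertPEquiv : (insertPEquiv a S).isSome ↔ a ∉ S := by
  simp [Option.isSome_iff_exists, ← Option.mem_def, mem_insertPEquiv]

lemma isSome_insertPEquiv_symm : ((insertPEquiv a).symm S).isSome ↔ a ∈ S := by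
  simp [Option.isSome_iff_exists, ← Option.mem_def, mem_insertPEquiv_symm]

lemma isSome_movePEquiv (hab : a ≠ b) : (movePEquiv a b S).isSome ↔ a ∈ S ∧ b ∉ S := by
  simp [Option.isSome_iff_exists, ← Option.mem_def, mem_movePEquiv hab]

lemma insertPEquiv_trans_movePEquiv_symm_comm (hac : a ≠ c) (hbc : b ≠ c) :
    (insertPEquiv a).trans (movePEquiv b c).symm =
      (movePEquiv b c).symm.trans (insertPEquiv a) := by
  ext S T
  simp only [← Option.mem_def, movePEquiv_symm, PEquiv.mem_trans, mem_insertPEquiv,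
    mem_movePEquiv hbc.symm]
  grind

lemma movePEquiv_trans_movePEquiv_symm_comm (hab : a ≠ b) (hcd : c ≠ d) (hac : a ≠ c)
    (hbd : b ≠ d) :
    (movePEquiv a b).trans (movePEquiv c d).symm =
      (movePEquiv c d).symm.trans (movePEquiv a b) := by
  ext S T
  simp only [← Option.mem_def, movePEquiv_symm, PEquiv.mem_trans, mem_movePEquiv hab,
    mem_movePEquiv hcd.symm]
  grind

lemma sum_add_of_mem_movePEquiv {M : Type*} [AddCommMonoid M] (f : α → M) (hab : a ≠ b)
    (hT : T ∈ movePEquiv a b S) : ∑ x ∈ T, f x + f a = ∑ x ∈ S, f x + f b := by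
  obtain ⟨ha, hb, rfl⟩ := (mem_movePEquiv hab).1 hT
  rw [sum_insert (by simp [hb]), add_assoc, sum_erase_add _ _ ha, add_comm]

end Finset

lemma PEquiv.toMatrix_ofSet {ι R : Type*} [DecidableEq ι] [Zero R] [One R] (s : Set ι)
    [DecidablePred (· ∈ s)] :
    ((PEquiv.ofSet s).toMatrix : Matrix ι ι R) = diagonal fun i => if i ∈ s then 1 else 0 := by
  ext i j
  by_cases h : i = j
  · subst h; simp
  · simp [Ne.symm h, h]

section Matrix

variable {ι K R : Type*} [Fintype ι] [DecidableEq ι] [Fintype K]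

theorem PEquiv.commutator_eq_diagonal [CommRing R] (P : K → ι ≃. ι) (c : K → R)
    (hP : Pairwise fun j k => (P j).trans (P k).symm = (P k).symm.trans (P j))
    (U : Matrix ι ι R) (hU : U = ∑ k, c k • (P k).toMatrix) :
    U * Uᵀ - Uᵀ * U = diagonal fun S => ∑ k, c k ^ 2 *
      ((if (P k S).isSome then 1 else 0) - if ((P k).symm S).isSome then 1 else 0) := by
  have hUt : Uᵀ = ∑ k, c k • (P k).symm.toMatrix := by
    simp [hU, transpose_sum, PEquiv.toMatrix_symm]
  have hUUt : U * Uᵀ = ∑ j, ∑ k, (c j * c k) • ((P j).trans (P k).symm).toMatrix := by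
    rw [hUt, hU, sum_mul_sum]
    simp only [smul_mul_smul_comm, PEquiv.toMatrix_trans]
  have hUtU : Uᵀ * U = ∑ j, ∑ k, (c j * c k) • ((P k).symm.trans (P j)).toMatrix := by
    rw [hUt, hU, sum_mul_sum, sum_comm]
    refine sum_congr rfl fun j _ => sum_congr rfl fun k _ => ?_
    rw [smul_mul_smul_comm, PEquiv.toMatrix_trans, mul_comm]
  have hrow : ∀ j, ∑ k, (c j * c k) • (((P j).trans (P k).symm).toMatrix : Matrix ι ι R) -
      ∑ k, (c j * c k) • ((P k).symm.trans (P j)).toMatrix =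
      c j ^ 2 • diagonal fun S =>
        (if (P j S).isSome then 1 else 0) - if ((P j).symm S).isSome then 1 else 0 := by
    intro j
    rw [← sum_sub_distrib, sum_eq_single j (fun k _ hkj => by rw [hP hkj.symm, sub_self])
      (by simp), ← smul_sub, PEquiv.self_trans_symm, PEquiv.symm_trans_self,
      PEquiv.toMatrix_ofSet, PEquiv.toMatrix_ofSet, diagonal_sub, sq]
    rfl
  rw [hUUt, hUtU, ← sum_sub_distrib, sum_congr rfl fun j _ => hrow j]
  ext S T
  by_cases hST : S = T
  · subst hST; simp [Matrix.sum_apply]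
  · simp [Matrix.sum_apply, hST]

theorem sum_mul_sq_nonpos_of_vecMul_eq_zero [CommRing R] [LinearOrder R] [IsStrictOrderedRing R]
    {U : Matrix ι ι R} {h : ι → R} (hU : U * Uᵀ - Uᵀ * U = diagonal h) {w : ι → R}
    (hw : w ᵥ* U = 0) :
    ∑ S, h S * w S ^ 2 ≤ 0 := by
  have key : ∑ S, h S * w S ^ 2 = -((U *ᵥ w) ⬝ᵥ (U *ᵥ w)) := by
    calc ∑ S, h S * w S ^ 2 = w ⬝ᵥ (diagonal h *ᵥ w) := by
          simp only [dotProduct, mulVec_diagonal]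
          exact sum_congr rfl fun S _ => by ring
      _ = (w ᵥ* U) ⬝ᵥ (w ᵥ* U) - (U *ᵥ w) ⬝ᵥ (U *ᵥ w) := by
          rw [← hU, sub_mulVec, dotProduct_sub, ← mulVec_mulVec, ← mulVec_mulVec,
            dotProduct_mulVec w U, mulVec_transpose, dotProduct_mulVec w Uᵀ, vecMul_transpose]
      _ = _ := by rw [hw, zero_dotProduct, zero_sub]
  rw [key, neg_nonpos]
  exact sum_nonneg fun _ _ => mul_self_nonneg _

theorem card_filter_le_card_filter_succ [Field R] [LinearOrder R] [IsStrictOrderedRing R]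
    {rk : ι → ℕ} {U : Matrix ι ι R} {h : ι → R}
    (hgr : ∀ S T, U S T ≠ 0 → rk T = rk S + 1) (hU : U * Uᵀ - Uᵀ * U = diagonal h) {i : ℕ}
    (hpos : ∀ S, rk S = i → 0 < h S) : #{S | rk S = i} ≤ #{S | rk S = i + 1} := by
  let L : ({S // rk S = i} → R) →ₗ[R] {T // rk T = i + 1} → R :=
    LinearMap.funLeft R R Subtype.val ∘ₗ U.vecMulLinear ∘ₗ
      Function.ExtendByZero.linearMap R Subtype.val
  have hL : Function.Injective L := by
    refine (injective_iff_map_eq_zero L).2 fun v hv => ?_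
    set w : ι → R := Function.extend Subtype.val v 0
    have hw : ∀ S : {S // rk S = i}, w S = v S := Subtype.val_injective.extend_apply v 0
    have hw' : ∀ S, rk S ≠ i → w S = 0 := fun S hS =>
      Function.extend_apply' _ _ _ fun ⟨S', hS'⟩ => hS (hS' ▸ S'.2)
    have hwU : w ᵥ* U = 0 := by
      funext T
      by_cases hT : rk T = i + 1
      · exact congrFun hv ⟨T, hT⟩
      · refine sum_eq_zero fun S _ => show w S * U S T = 0 from ?_
        by_cases hS : rk S = i
        · have hUST : U S T = 0 := by
            by_contra hST
            exact hT (by rw [hgr S T hST, hS])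
          rw [hUST, mul_zero]
        · rw [hw' S hS, zero_mul]
    have hterm : ∀ S, 0 ≤ h S * w S ^ 2 := fun S => by
      by_cases hS : rk S = i
      · exact mul_nonneg (hpos S hS).le (sq_nonneg _)
      · rw [hw' S hS]; simp
    have hzero := (sum_eq_zero_iff_of_nonneg fun S _ => hterm S).1
      (le_antisymm (sum_mul_sq_nonpos_of_vecMul_eq_zero hU hwU) (sum_nonneg fun S _ => hterm S))
    funext S
    have := hzero S (mem_univ _)
    rw [hw] at this
    simpa [(hpos S S.2).ne'] using this
  simpa only [← Fintype.card_subtype, Module.finrank_fintype_fun_eq_card] using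
    LinearMap.finrank_le_finrank_of_injective hL

end Matrix

theorem Fin.sum_mul_sub_succ {R : Type*} [CommRing R] {n : ℕ} (a : ℕ → R) (f : Fin (n + 1) → R) :
    ∑ k : Fin n, a (k + 1) * (f k.castSucc - f k.succ) =
      a 0 * f 0 - a (n + 1) * f (Fin.last n) - ∑ k : Fin (n + 1), (a k - a (k + 1)) * f k := by
  have hcast := Fin.sum_univ_castSucc fun k : Fin (n + 1) => a (k + 1) * f k
  have hsucc := Fin.sum_univ_succ fun k : Fin (n + 1) => a k * f k
  simp only [Fin.val_castSucc, Fin.val_succ, Fin.val_zero, Fin.val_last] at hcast hsucc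
  simp only [mul_sub, sub_mul, sum_sub_distrib]
  rw [hcast, hsucc]
  ring

namespace SubsetSum

/-- `x : Fin m` stands for the element `x + 1` of `{1, …, m}`. -/
def rank {m : ℕ} (S : Finset (Fin m)) : ℕ := ∑ x ∈ S, ((x : ℕ) + 1)

variable (n : ℕ)

def raise : Fin (n + 1) → Finset (Fin (n + 1)) ≃. Finset (Fin (n + 1)) :=
  Fin.cases (insertPEquiv 0) fun k => movePEquiv k.castSucc k.succ

/-- Squared weights of the moves: with `d t = (n + 1 - t) (n + t + 2)`, the move into position
`t ≥ 1` gets `d t` and the insertion gets `d 0 / 2`. Since `d t - d (t + 1) = 2 (t + 1)` and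
`d (n + 1) = 0`, the diagonal of the commutator of `upMatrix` telescopes to `N - 2 ρ`. -/
noncomputable def raiseWeight : Fin (n + 1) → ℝ :=
  Fin.cases ((n + 1) * (n + 2) / 2) fun k => (n - k) * (n + k + 3)

noncomputable def upMatrix : Matrix (Finset (Fin (n + 1))) (Finset (Fin (n + 1))) ℝ :=
  ∑ k, √(raiseWeight n k) • (raise n k).toMatrix

variable {n}

theorem raise_trans_symm_comm :
    Pairwise fun j k =>
      (raise n j).trans (raise n k).symm = (raise n k).symm.trans (raise n j) := by
  intro j k hjk
  cases j using Fin.cases with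
  | zero =>
    cases k using Fin.cases with
    | zero => exact absurd rfl hjk
    | succ k =>
      exact insertPEquiv_trans_movePEquiv_symm_comm (Fin.succ_ne_zero k).symm
        (Fin.castSucc_lt_succ (i := k)).ne
  | succ j =>
    cases k using Fin.cases with
    | zero =>
      have := congrArg PEquiv.symm <| insertPEquiv_trans_movePEquiv_symm_comm
        (Fin.succ_ne_zero j).symm (Fin.castSucc_lt_succ (i := j)).ne
      simp only [PEquiv.symm_trans_rev, PEquiv.symm_symm] at this
      exact this
    | succ k =>
      have hjk : j ≠ k := fun h => hjk (congrArg Fin.succ h)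
      exact movePEquiv_trans_movePEquiv_symm_comm Fin.castSucc_lt_succ.ne Fin.castSucc_lt_succ.ne
        (Fin.castSucc_injective _ |>.ne hjk) (Fin.succ_injective _ |>.ne hjk)

theorem rank_of_mem_raise {k : Fin (n + 1)} {S T : Finset (Fin (n + 1))} (h : T ∈ raise n k S) :
    rank T = rank S + 1 := by
  cases k using Fin.cases with
  | zero =>
    obtain ⟨h0, rfl⟩ := mem_insertPEquiv.1 h
    simp [rank, sum_insert h0, add_comm]
  | succ k =>
    have := sum_add_of_mem_movePEquiv (fun x : Fin (n + 1) => (x : ℕ) + 1)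
      Fin.castSucc_lt_succ.ne h
    simp only [Fin.val_castSucc, Fin.val_succ] at this
    simp only [rank]
    omega

theorem rank_of_upMatrix_ne_zero {S T : Finset (Fin (n + 1))} (h : upMatrix n S T ≠ 0) :
    rank T = rank S + 1 := by
  obtain ⟨k, -, hk⟩ := exists_ne_zero_of_sum_ne_zero (by simpa [upMatrix, Matrix.sum_apply] using h)
  exact rank_of_mem_raise (k := k) (of_not_not fun hT => hk (if_neg hT))

theorem raiseWeight_nonneg (k : Fin (n + 1)) : 0 ≤ raiseWeight n k := by
  cases k using Fin.cases with
  | zero => simp only [raiseWeight, Fin.cases_zero]; positivity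
  | succ k =>
    have : (k : ℝ) ≤ n := by exact_mod_cast k.is_lt.le
    simp only [raiseWeight, Fin.cases_succ]
    nlinarith

theorem cast_rank (S : Finset (Fin (n + 1))) :
    (rank S : ℝ) = ∑ k : Fin (n + 1), ((k : ℝ) + 1) * if k ∈ S then 1 else 0 := by
  simp [rank, mul_ite, sum_ite_mem]

theorem sum_raiseWeight_succ_mul_sub (χ : Fin (n + 1) → ℝ) :
    ∑ k : Fin n, raiseWeight n k.succ * (χ k.castSucc - χ k.succ) =
      (n + 1) * (n + 2) * χ 0 - 2 * ∑ k : Fin (n + 1), ((k : ℝ) + 1) * χ k := by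
  set a : ℕ → ℝ := fun t => (n + 1 - t) * (n + t + 2)
  calc _ = ∑ k : Fin n, a (k + 1) * (χ k.castSucc - χ k.succ) :=
        sum_congr rfl fun k _ => by simp only [raiseWeight, Fin.cases_succ, a]; push_cast; ring
    _ = a 0 * χ 0 - a (n + 1) * χ (Fin.last n) - ∑ k : Fin (n + 1), (a k - a (k + 1)) * χ k :=
        Fin.sum_mul_sub_succ a χ
    _ = _ := by
        rw [mul_sum]
        congr 1
        · simp only [a]; push_cast; ring
        · exact sum_congr rfl fun k _ => by simp only [a]; push_cast; ring

theorem upMatrix_commutator :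
    upMatrix n * (upMatrix n)ᵀ - (upMatrix n)ᵀ * upMatrix n =
      diagonal fun S => ((n : ℝ) + 1) * (n + 2) / 2 - 2 * rank S := by
  rw [PEquiv.commutator_eq_diagonal (raise n) (fun k => √(raiseWeight n k)) raise_trans_symm_comm
    (upMatrix n) rfl]
  congr 1
  funext S
  set χ : Fin (n + 1) → ℝ := fun k => if k ∈ S then 1 else 0
  have hmove (k : Fin n) : ((if (raise n k.succ S).isSome then 1 else 0) -
      if ((raise n k.succ).symm S).isSome then 1 else 0 : ℝ) = χ k.castSucc - χ k.succ := by
    simp only [raise, Fin.cases_succ, movePEquiv_symm, isSome_movePEquiv Fin.castSucc_lt_succ.ne,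
      isSome_movePEquiv Fin.castSucc_lt_succ.ne.symm, χ]
    split_ifs <;> simp_all
  have h0 : ((if (0 : Fin (n + 1)) ∉ S then 1 else 0) - if 0 ∈ S then 1 else 0 : ℝ) =
      1 - 2 * χ 0 := by
    simp only [χ]
    split_ifs <;> norm_num
  simp only [Real.sq_sqrt (raiseWeight_nonneg _), Fin.sum_univ_succ (n := n), hmove]
  rw [sum_raiseWeight_succ_mul_sub]
  simp only [raise, raiseWeight, Fin.cases_zero, isSome_insertPEquiv, isSome_insertPEquiv_symm,
    cast_rank, h0]
  ring

theorem card_rank_le_card_rank_succ {i : ℕ} (hi : 2 * i < (n + 1) * (n + 2) / 2) :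
    #{S : Finset (Fin (n + 1)) | rank S = i} ≤ #{S : Finset (Fin (n + 1)) | rank S = i + 1} := by
  refine card_filter_le_card_filter_succ (rk := rank) (U := upMatrix n)
    (fun _ _ => rank_of_upMatrix_ne_zero) upMatrix_commutator fun S hS => ?_
  have hi' : ((2 * i + 1 : ℕ) : ℝ) ≤ (((n + 1) * (n + 2) / 2 : ℕ) : ℝ) := by exact_mod_cast hi
  have hdiv := Nat.cast_div_le (α := ℝ) (m := (n + 1) * (n + 2)) (n := 2)
  push_cast at hi' hdiv
  rw [hS]
  linarith

theorem card_filter_powerset_Icc (m i : ℕ) :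
    #{S ∈ (Icc 1 m).powerset | S.sum id = i} = #{S : Finset (Fin m) | rank S = i} := by
  have hinj : Function.Injective fun x : Fin m => (x : ℕ) + 1 := fun x y h =>
    Fin.ext (Nat.succ_injective h)
  have hIcc : Icc 1 m = univ.image fun x : Fin m => (x : ℕ) + 1 := by
    ext y
    simp only [mem_Icc, mem_image, mem_univ, true_and]
    exact ⟨fun h => ⟨⟨y - 1, by omega⟩, by simp; omega⟩, by rintro ⟨x, rfl⟩; omega⟩
  rw [hIcc, powerset_image, filter_image, card_image_of_injective _ (image_injective hinj),
    powerset_univ]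
  congr! with S
  simp [rank, sum_image hinj.injOn]

end SubsetSum

theorem rank_unimodal_general (m : ℕ) :
    ∀ i j : ℕ, i ≤ j → 2 * j ≤ m * (m + 1) / 2 →
      (((Finset.Icc 1 m).powerset.filter fun S => S.sum id = i)).card ≤
        (((Finset.Icc 1 m).powerset.filter fun S => S.sum id = j)).card := by
  intro i j hij hj
  simp only [SubsetSum.card_filter_powerset_Icc]
  cases m with
  | zero =>
    obtain rfl : i = j := by omega
    rfl
  | succ n =>
    rw [show n + 1 + 1 = n + 2 from rfl] at hj
    induction j, hij using Nat.le_induction with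
    | base => rfl
    | succ j hij ih =>
      exact (ih (by omega)).trans (SubsetSum.card_rank_le_card_rank_succ (by omega))

/-- rank unimodality up to the middle. For `0 ≤ i ≤ j` with
`2j ≤ m(m+1)/2`, the number of subsets of `{1,…,m}` with sum `i` is at most the
number of subsets with sum `j`. -/
theorem rank_unimodal (m : ℕ) (hm : 0 < m) :
    ∀ i j : ℕ, i ≤ j → 2 * j ≤ m * (m + 1) / 2 →
      (((Finset.Icc 1 m).powerset.filter fun S => S.sum id = i)).card ≤
        (((Finset.Icc 1 m).powerset.filter fun S => S.sum id = j)).card :=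
  rank_unimodal_general m
end

section
/- Let m be a strictly positive integer. For 1 ≤ j ≤ m set k_j = ∑_{l=1}^{j−1} 2^{m−l} and S_j = { k_j + 2^i : 0 ≤ i ≤ m−j }, and let S = ∪_{j=1}^m S_j ⊆ {0,1,…,2^m − 1}. Then the sets S_j are pairwise disjoint with #S_j = m + 1 − j, hence #S = binom(m+1,2) = m(m+1)/2, and the set of binary vectors of length m obtained as the binary expansions of the elements of S (bit i−1 of the integer giving coordinate i of the vector) is a chain, i.e., totally ordered, under the partial order ⪯ generated by ≼_SH. -/
/-- The binary vector of length `m` obtained from the binary expansion of `n`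
(bit `i-1` of `n` gives coordinate `i`, i.e. bit `i` gives coordinate `i` in
0-based indexing). -/
def toVec (m : ℕ) (n : ℕ) : Fin m → Bool := fun i => n.testBit (i : ℕ)

open Finset

-- `blockOffset m j` is `k_j` and `block m j` is `S_j`.
def blockOffset (m j : ℕ) : ℕ := ∑ l ∈ Icc 1 (j - 1), 2 ^ (m - l)

def block (m j : ℕ) : Finset ℕ := (range (m - j + 1)).image (fun i => blockOffset m j + 2 ^ i)

theorem mem_block {m j a : ℕ} : a ∈ block m j ↔ ∃ i ≤ m - j, blockOffset m j + 2 ^ i = a := by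
  simp only [block, mem_image, mem_range, Nat.lt_succ_iff]

theorem blockOffset_succ (m : ℕ) {j : ℕ} (hj : 1 ≤ j) :
    blockOffset m (j + 1) = blockOffset m j + 2 ^ (m - j) := by
  obtain ⟨j, rfl⟩ := Nat.exists_eq_add_of_le' hj
  rw [blockOffset, blockOffset, Nat.add_sub_cancel, Nat.add_sub_cancel, sum_Icc_succ_top (by omega)]

theorem blockOffset_mono (m : ℕ) : Monotone (blockOffset m) := fun _ _ h =>
  sum_le_sum_of_subset (Icc_subset_Icc_right (by omega))

theorem blockOffset_add_two_pow (m : ℕ) {j : ℕ} (hj : 1 ≤ j) (hjm : j ≤ m + 1) :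
    blockOffset m j + 2 ^ (m + 1 - j) = 2 ^ m := by
  induction j, hj using Nat.le_induction with
  | base => simp [blockOffset]
  | succ j hj ih =>
    rw [blockOffset_succ m hj, ← ih (by omega), show m + 1 - j = m - j + 1 by omega,
      show m + 1 - (j + 1) = m - j by omega, pow_succ]
    ring

theorem blockOffset_eq (m : ℕ) {j : ℕ} (hj : 1 ≤ j) (hjm : j ≤ m + 1) :
    blockOffset m j = 2 ^ (m + 1 - j) * (2 ^ (j - 1) - 1) := by
  rw [Nat.mul_sub_one, ← pow_add, Nat.sub_add_sub_cancel hjm hj, Nat.add_sub_cancel,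
    ← blockOffset_add_two_pow m hj hjm, Nat.add_sub_cancel]

theorem blockOffset_add_two_pow_lt {m j j' i i' : ℕ} (hj : 1 ≤ j) (hjj' : j < j') (hi : i ≤ m - j) :
    blockOffset m j + 2 ^ i < blockOffset m j' + 2 ^ i' :=
  calc blockOffset m j + 2 ^ i ≤ blockOffset m j + 2 ^ (m - j) := by gcongr; norm_num
    _ = blockOffset m (j + 1) := (blockOffset_succ m hj).symm
    _ ≤ blockOffset m j' := blockOffset_mono m hjj'
    _ < blockOffset m j' + 2 ^ i' := by simp

theorem pairwiseDisjoint_block (m : ℕ) : (Set.Ici 1).PairwiseDisjoint (block m) := by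
  suffices h : ∀ j j', 1 ≤ j → j < j' → Disjoint (block m j) (block m j') by
    intro j hj j' hj' hne
    rcases hne.lt_or_gt with hlt | hlt
    · exact h j j' hj hlt
    · exact (h j' j hj' hlt).symm
  intro j j' hj hjj'
  refine disjoint_left.mpr fun a ha ha' => ?_
  obtain ⟨i, hi, rfl⟩ := mem_block.mp ha
  obtain ⟨i', -, he⟩ := mem_block.mp ha'
  exact (blockOffset_add_two_pow_lt hj hjj' hi).ne' he

theorem card_block {m j : ℕ} (hjm : j ≤ m) : #(block m j) = m + 1 - j := by
  have hinj : Function.Injective (fun i => blockOffset m j + 2 ^ i) :=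
    (add_right_injective _).comp (Nat.pow_right_injective le_rfl)
  rw [block, card_image_of_injective _ hinj, card_range]
  omega

theorem sum_Icc_succ_sub (m : ℕ) : ∑ j ∈ Icc 1 m, (m + 1 - j) = m * (m + 1) / 2 := by
  have hreflect : ∑ j ∈ Icc 1 m, (m + 1 - j) = ∑ i ∈ range m, (i + 1) :=
    sum_nbij' (fun j => m - j) (fun i => m - i)
      (fun j hj => by simp only [mem_Icc, mem_range] at hj ⊢; omega)
      (fun i hi => by simp only [mem_Icc, mem_range] at hi ⊢; omega)
      (fun j hj => by simp only [mem_Icc] at hj; omega)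
      (fun i hi => by simp only [mem_range] at hi; omega)
      (fun j hj => by simp only [mem_Icc] at hj; omega)
  rw [hreflect, ← add_zero (∑ i ∈ range m, (i + 1)), ← sum_range_succ' (fun i => i), sum_range_id,
    Nat.add_sub_cancel, mul_comm]

theorem card_biUnion_block (m : ℕ) : #((Icc 1 m).biUnion (block m)) = m * (m + 1) / 2 := by
  rw [card_biUnion ((pairwiseDisjoint_block m).subset fun j hj => (mem_Icc.mp hj).1),
    sum_congr rfl fun j hj => card_block (mem_Icc.mp hj).2, sum_Icc_succ_sub]

theorem testBit_blockOffset_add_two_pow {m j i : ℕ} (hj : 1 ≤ j) (hjm : j ≤ m) (hi : i ≤ m - j)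
    (t : ℕ) : (blockOffset m j + 2 ^ i).testBit t = decide (t = i ∨ m + 1 - j ≤ t ∧ t < m) := by
  have hlt : 2 ^ i < 2 ^ (m + 1 - j) := Nat.pow_lt_pow_right one_lt_two (by omega)
  rw [blockOffset_eq m hj (by omega), Nat.testBit_two_pow_mul_add _ hlt]
  split_ifs
  · rw [Nat.testBit_two_pow, decide_eq_decide]
    omega
  · rw [Nat.testBit_two_pow_sub_one, decide_eq_decide]
    omega

def indicesFrom (m s : ℕ) : Finset (Fin m) := univ.filter (fun t => s ≤ (t : ℕ))

theorem mem_indicesFrom {m s : ℕ} {t : Fin m} : t ∈ indicesFrom m s ↔ s ≤ (t : ℕ) := by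
  simp [indicesFrom]

theorem mem_supp_toVec_blockOffset_add_two_pow {m j i : ℕ} (hj : 1 ≤ j) (hjm : j ≤ m)
    (hi : i ≤ m - j) (t : Fin m) :
    t ∈ supp m (toVec m (blockOffset m j + 2 ^ i)) ↔ (t : ℕ) = i ∨ m + 1 - j ≤ t := by
  simp only [supp, toVec, mem_filter, mem_univ, true_and, testBit_blockOffset_add_two_pow hj hjm hi,
    decide_eq_true_eq, t.isLt, and_true]

theorem supp_toVec_blockOffset_add_two_pow {m j i : ℕ} (hj : 1 ≤ j) (hjm : j ≤ m)
    (hi : i ≤ m - j) (him : i < m) :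
    supp m (toVec m (blockOffset m j + 2 ^ i)) = insert ⟨i, him⟩ (indicesFrom m (m + 1 - j)) := by
  ext t
  rw [mem_supp_toVec_blockOffset_add_two_pow hj hjm hi, mem_insert, mem_indicesFrom, Fin.ext_iff]

theorem supp_toVec_blockOffset_add_two_pow_sub {m j : ℕ} (hj : 1 ≤ j) (hjm : j ≤ m) :
    supp m (toVec m (blockOffset m j + 2 ^ (m - j))) = indicesFrom m (m - j) := by
  ext t
  rw [mem_supp_toVec_blockOffset_add_two_pow hj hjm le_rfl, mem_indicesFrom]
  omega

theorem sortedSupp_eq_cons {m : ℕ} {u : Fin m → Bool} {a : Fin m} {T : Finset (Fin m)}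
    (hu : supp m u = insert a T) (ha : ∀ t ∈ T, a < t) :
    sortedSupp m u = a :: T.sort (· ≤ ·) := by
  rw [sortedSupp, hu, sort_insert _ (fun t ht => (ha t ht).le) fun haT => lt_irrefl a (ha a haT)]

theorem relH_of_supp_eq_insert {m : ℕ} {u v : Fin m → Bool} {a b : Fin m} {T : Finset (Fin m)}
    (hu : supp m u = insert a T) (hv : supp m v = insert b T)
    (ha : ∀ t ∈ T, a < t) (hb : ∀ t ∈ T, b < t) (hab : a ≤ b) : relH m u v := by
  refine ⟨?_, fun k hku hkv => ?_⟩
  · rw [hu, hv, card_insert_of_notMem fun h => lt_irrefl a (ha a h),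
      card_insert_of_notMem fun h => lt_irrefl b (hb b h)]
  · -- the bounds `hku`, `hkv` mention the lists, so they are generalized rather than rewritten
    have hsu := sortedSupp_eq_cons hu ha
    have hsv := sortedSupp_eq_cons hv hb
    generalize sortedSupp m u = su at hsu hku ⊢
    generalize sortedSupp m v = sv at hsv hkv ⊢
    subst hsu hsv
    cases k with
    | zero => exact hab
    | succ k => exact le_rfl

theorem relSH_of_supp_ssubset {m : ℕ} {u v : Fin m → Bool} (h : supp m u ⊂ supp m v) :
    relSH m u v :=
  Or.inl ⟨(card_lt_card h).ne, h.subset⟩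

theorem relH_toVec_block {m j i i' : ℕ} (hj : 1 ≤ j) (hjm : j ≤ m) (hii' : i ≤ i')
    (hi' : i' ≤ m - j) :
    relH m (toVec m (blockOffset m j + 2 ^ i)) (toVec m (blockOffset m j + 2 ^ i')) :=
  relH_of_supp_eq_insert (supp_toVec_blockOffset_add_two_pow hj hjm (hii'.trans hi') (by omega))
    (supp_toVec_blockOffset_add_two_pow hj hjm hi' (by omega))
    (fun t ht => by rw [mem_indicesFrom] at ht; exact Fin.mk_lt_of_lt_val (by omega))
    (fun t ht => by rw [mem_indicesFrom] at ht; exact Fin.mk_lt_of_lt_val (by omega))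
    (Fin.mk_le_mk.mpr hii')

theorem relSH_toVec_block_succ {m j i' : ℕ} (hj : 1 ≤ j) (hjm : j < m) (hi' : i' ≤ m - (j + 1)) :
    relSH m (toVec m (blockOffset m j + 2 ^ (m - j)))
      (toVec m (blockOffset m (j + 1) + 2 ^ i')) := by
  apply relSH_of_supp_ssubset
  rw [supp_toVec_blockOffset_add_two_pow_sub hj hjm.le,
    supp_toVec_blockOffset_add_two_pow (by omega) hjm hi' (by omega),
    show m + 1 - (j + 1) = m - j by omega]
  exact ssubset_insert fun h => by rw [mem_indicesFrom] at h; simp only at h; omega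

theorem leSH_toVec_block_of_lt {m j j' i i' : ℕ} (hj : 1 ≤ j) (hjj' : j < j') (hj'm : j' ≤ m)
    (hi : i ≤ m - j) (hi' : i' ≤ m - j') :
    leSH m (toVec m (blockOffset m j + 2 ^ i)) (toVec m (blockOffset m j' + 2 ^ i')) := by
  induction j', hjj' using Nat.le_induction generalizing i' with
  | base =>
    exact .head (Or.inr (relH_toVec_block hj (by omega) hi le_rfl))
      (.single (relSH_toVec_block_succ hj (by omega) hi'))
  | succ j' hjj' ih =>
    exact (ih (by omega) le_rfl).tail (relSH_toVec_block_succ (by omega) (by omega) hi')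

theorem leSH_toVec_block_of_toLex_le {m j j' i i' : ℕ} (hj : 1 ≤ j) (hj'm : j' ≤ m)
    (hi : i ≤ m - j) (hi' : i' ≤ m - j') (h : toLex (j, i) ≤ toLex (j', i')) :
    leSH m (toVec m (blockOffset m j + 2 ^ i)) (toVec m (blockOffset m j' + 2 ^ i')) := by
  rcases Prod.Lex.toLex_le_toLex.mp h with hjj' | ⟨rfl, hii'⟩
  · exact leSH_toVec_block_of_lt hj hjj' hj'm hi hi'
  · exact .single (Or.inr (relH_toVec_block hj hj'm hii' hi'))

theorem leSH_total_of_mem_biUnion_block {m a b : ℕ} (ha : a ∈ (Icc 1 m).biUnion (block m))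
    (hb : b ∈ (Icc 1 m).biUnion (block m)) :
    leSH m (toVec m a) (toVec m b) ∨ leSH m (toVec m b) (toVec m a) := by
  simp only [mem_biUnion, mem_Icc, mem_block] at ha hb
  obtain ⟨j, ⟨hj, hjm⟩, i, hi, rfl⟩ := ha
  obtain ⟨j', ⟨hj', hj'm⟩, i', hi', rfl⟩ := hb
  rcases le_total (toLex (j, i)) (toLex (j', i')) with h | h
  · exact .inl (leSH_toVec_block_of_toLex_le hj hj'm hi hi' h)
  · exact .inr (leSH_toVec_block_of_toLex_le hj' hjm hi' hi h)

theorem algorithm_max_chain_general (m : ℕ) :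
    (∀ j₁ ∈ Finset.Icc 1 m, ∀ j₂ ∈ Finset.Icc 1 m, j₁ ≠ j₂ →
      Disjoint
        ((Finset.range (m - j₁ + 1)).image
          (fun i => (∑ l ∈ Finset.Icc 1 (j₁ - 1), 2 ^ (m - l)) + 2 ^ i))
        ((Finset.range (m - j₂ + 1)).image
          (fun i => (∑ l ∈ Finset.Icc 1 (j₂ - 1), 2 ^ (m - l)) + 2 ^ i))) ∧
    (∀ j ∈ Finset.Icc 1 m,
      ((Finset.range (m - j + 1)).image
        (fun i => (∑ l ∈ Finset.Icc 1 (j - 1), 2 ^ (m - l)) + 2 ^ i)).card =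
        m + 1 - j) ∧
    ((Finset.Icc 1 m).biUnion (fun j =>
        (Finset.range (m - j + 1)).image
          (fun i => (∑ l ∈ Finset.Icc 1 (j - 1), 2 ^ (m - l)) + 2 ^ i))).card =
      m * (m + 1) / 2 ∧
    (∀ a ∈ (Finset.Icc 1 m).biUnion (fun j =>
        (Finset.range (m - j + 1)).image
          (fun i => (∑ l ∈ Finset.Icc 1 (j - 1), 2 ^ (m - l)) + 2 ^ i)),
      ∀ b ∈ (Finset.Icc 1 m).biUnion (fun j =>
        (Finset.range (m - j + 1)).image
          (fun i => (∑ l ∈ Finset.Icc 1 (j - 1), 2 ^ (m - l)) + 2 ^ i)),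
      leSH m (toVec m a) (toVec m b) ∨ leSH m (toVec m b) (toVec m a)) :=
  ⟨fun _ hj₁ _ hj₂ hne =>
      pairwiseDisjoint_block m (mem_Icc.mp hj₁).1 (mem_Icc.mp hj₂).1 hne,
    fun _ hj => card_block (mem_Icc.mp hj).2,
    card_biUnion_block m,
    fun _ ha _ hb => leSH_total_of_mem_biUnion_block ha hb⟩

/-- with `k_j = ∑_{l=1}^{j-1} 2^{m-l}` and
`S_j = { k_j + 2^i : 0 ≤ i ≤ m-j }`, the sets `S_j` (for `1 ≤ j ≤ m`) are pairwise
disjoint with `#S_j = m + 1 - j`, hence `#S = m(m+1)/2` for `S = ∪_j S_j`, and the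
binary expansions of the elements of `S` form a chain under the order generated
by `≼_SH`. -/
theorem algorithm_max_chain (m : ℕ) (hm : 0 < m) :
    (∀ j₁ ∈ Finset.Icc 1 m, ∀ j₂ ∈ Finset.Icc 1 m, j₁ ≠ j₂ →
      Disjoint
        ((Finset.range (m - j₁ + 1)).image
          (fun i => (∑ l ∈ Finset.Icc 1 (j₁ - 1), 2 ^ (m - l)) + 2 ^ i))
        ((Finset.range (m - j₂ + 1)).image
          (fun i => (∑ l ∈ Finset.Icc 1 (j₂ - 1), 2 ^ (m - l)) + 2 ^ i))) ∧
    (∀ j ∈ Finset.Icc 1 m,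
      ((Finset.range (m - j + 1)).image
        (fun i => (∑ l ∈ Finset.Icc 1 (j - 1), 2 ^ (m - l)) + 2 ^ i)).card =
        m + 1 - j) ∧
    ((Finset.Icc 1 m).biUnion (fun j =>
        (Finset.range (m - j + 1)).image
          (fun i => (∑ l ∈ Finset.Icc 1 (j - 1), 2 ^ (m - l)) + 2 ^ i))).card =
      m * (m + 1) / 2 ∧
    (∀ a ∈ (Finset.Icc 1 m).biUnion (fun j =>
        (Finset.range (m - j + 1)).image
          (fun i => (∑ l ∈ Finset.Icc 1 (j - 1), 2 ^ (m - l)) + 2 ^ i)),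
      ∀ b ∈ (Finset.Icc 1 m).biUnion (fun j =>
        (Finset.range (m - j + 1)).image
          (fun i => (∑ l ∈ Finset.Icc 1 (j - 1), 2 ^ (m - l)) + 2 ^ i)),
      leSH m (toVec m a) (toVec m b) ∨ leSH m (toVec m b) (toVec m a)) :=
  algorithm_max_chain_general m
end

section
/- Let m be a strictly positive integer and let p_0 ∈ (0,1). Then there is no Heaviside most reliable composition with threshold p_0: there exists no u ∈ {0,1}^m such that simultaneously Rel(C^u; p) ≤ Rel(C^v; p) for all v ∈ {0,1}^m and all p ∈ [0, p_0), and Rel(C^u; p) ≥ Rel(C^v; p) for all v ∈ {0,1}^m and all p ∈ [p_0, 1]. -/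
/-!
Minimality on `[0, p₀)` forces `Rel(C^u; p) ≤ Rel(C^{0…0}; p) = p^(2^m)` there, and by continuity
also at `p₀`. Maximality at `p₀` forces `Rel(C^u; p₀) ≥ Rel(C^{1…1}; p₀) = 1 - (1 - p₀)^(2^m)`.
For `m > 0` these are incompatible, since `p₀^(2^m) < p₀ < 1 - (1 - p₀)^(2^m)`.
-/

theorem continuous_g (b : Bool) : Continuous (g b) := by
  unfold g
  cases b <;> simp only [Bool.false_eq_true, ↓reduceIte] <;> fun_prop

theorem continuous_list_foldr {ι X : Type*} [TopologicalSpace X] {f : ι → X → X}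
    (hf : ∀ i, Continuous (f i)) (L : List ι) : Continuous fun x => L.foldr f x := by
  induction L with
  | nil => exact continuous_id
  | cons i L ih => exact (hf i).comp ih

theorem continuous_RelC (m : ℕ) (u : Fin m → Bool) : Continuous (RelC m u) :=
  continuous_list_foldr (fun i => continuous_g (u i)) _

theorem RelC_const (m : ℕ) (b : Bool) (p : ℝ) : RelC m (fun _ => b) p = (g b)^[m] p := by
  rw [RelC, List.foldr_const, List.length_finRange]

theorem g_false_iterate (n : ℕ) (p : ℝ) : (g false)^[n] p = p ^ 2 ^ n := by
  induction n with
  | zero => simp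
  | succ n ih => rw [Function.iterate_succ_apply', ih, g, if_neg Bool.false_ne_true, ← pow_mul,
      pow_succ]

theorem g_true_iterate (n : ℕ) (p : ℝ) : (g true)^[n] p = 1 - (1 - p) ^ 2 ^ n := by
  induction n with
  | zero => simp
  | succ n ih => rw [Function.iterate_succ_apply', ih, g, if_pos rfl, sub_sub_cancel, ← pow_mul,
      pow_succ]

theorem pow_lt_one_sub_one_sub_pow {p : ℝ} (hp₀ : 0 < p) (hp₁ : p < 1) {n : ℕ} (hn : 1 < n) :
    p ^ n < 1 - (1 - p) ^ n := by
  have hpow : (1 - p) ^ n ≤ 1 - p := pow_le_of_le_one (by linarith) (by linarith) (by omega)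
  linarith [pow_lt_self_of_lt_one₀ hp₀ hp₁ hn]

/-- there is no Heaviside most reliable composition with threshold
`p₀ ∈ (0,1)`: no `u` is simultaneously pointwise minimal on `[0,p₀)` and
pointwise maximal on `[p₀,1]` among all compositions of size `2^m`. -/
theorem no_heaviside_most_reliable (m : ℕ) (hm : 0 < m)
    (p₀ : ℝ) (hp₀ : p₀ ∈ Set.Ioo (0:ℝ) 1) :
    ¬ ∃ u : Fin m → Bool,
        (∀ v : Fin m → Bool, ∀ p ∈ Set.Ico (0:ℝ) p₀, RelC m u p ≤ RelC m v p) ∧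
        (∀ v : Fin m → Bool, ∀ p ∈ Set.Icc p₀ (1:ℝ), RelC m v p ≤ RelC m u p) := by
  obtain ⟨hp₀0, hp₀1⟩ := hp₀
  rintro ⟨u, hmin, hmax⟩
  have hp₀_mem : p₀ ∈ closure (Set.Ico 0 p₀) := by
    rw [closure_Ico hp₀0.ne]
    exact ⟨hp₀0.le, le_rfl⟩
  have hle : RelC m u p₀ ≤ p₀ ^ 2 ^ m :=
    le_on_closure (g := fun p => p ^ 2 ^ m)
      (fun p hp => by simpa only [RelC_const, g_false_iterate] using hmin (fun _ => false) p hp)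
      (continuous_RelC m u).continuousOn (by fun_prop) hp₀_mem
  have hge : 1 - (1 - p₀) ^ 2 ^ m ≤ RelC m u p₀ := by
    simpa only [RelC_const, g_true_iterate] using hmax (fun _ => true) p₀ ⟨le_rfl, hp₀1.le⟩
  exact (pow_lt_one_sub_one_sub_pow hp₀0 hp₀1 (Nat.one_lt_two_pow hm.ne')).not_ge (hge.trans hle)
end
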